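/- arXiv:2203.02577 — 3 statements merged into one kernel-verified Lean document; each statement's English description precedes it below -/
import Mathlib

section
/- Let g : ℍ → ℂ be an injective holomorphic map on the upper half-plane satisfying g(z+1) = g(z) + 1 for all z ∈ ℍ. Then the function h on the punctured unit disk defined by h(exp(2πi z)) = exp(2πi g(z)) is well-defined, holomorphic, injective, and extends holomorphically to 0 with h(0) = 0. -/
/-!
Since `exp (2πi g)` is `1`-periodic on `ℍ`, it descends through `q = exp (2πi z)` to a holomorphic
map `h` on the punctured disk, injective because `g` is. By the open mapping theorem an injective
holomorphic map stays a positive distance away from one of its values near an isolated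
singularity, so `1 / (h - c)` is bounded there and `h` is meromorphic at `0`: `h q = q ^ k u q`
with `u 0 ≠ 0`. In the `z` coordinate, `exp (2πi (g z - k z)) → u 0` as `Im z → ∞`, so on a high
half-plane `2πi (g z - k z)` differs from a continuous branch of `log (u (exp (2πi z)))` by a
constant. The first changes by `2πi (1 - k)` under `z ↦ z + 1`, the second is periodic; hence
`k = 1` and `h` extends to `0` with `h 0 = 0`.
-/

open Complex Filter Function Metric Periodic Set Topology
open scoped Real

local notation "I∞" => comap im atTop

theorem meromorphicAt_of_eventually_le_norm_sub {f : ℂ → ℂ} {x c : ℂ} {ε : ℝ} (hε : 0 < ε)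
    (hd : ∀ᶠ z in 𝓝[≠] x, DifferentiableAt ℂ f z) (hfar : ∀ᶠ z in 𝓝[≠] x, ε ≤ ‖f z - c‖) :
    MeromorphicAt f x := by
  set φ : ℂ → ℂ := fun z => (f z - c)⁻¹
  obtain ⟨s, hs, hsφ⟩ : ∃ s ∈ 𝓝 x, ∀ z ∈ s \ {x}, DifferentiableAt ℂ φ z ∧ ‖φ z‖ ≤ ε⁻¹ := by
    refine ⟨_, eventually_nhdsWithin_iff.mp (hd.and hfar), fun z ⟨hz, hzx⟩ => ?_⟩
    obtain ⟨hdz, hfz⟩ := hz hzx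
    have hfc : f z - c ≠ 0 := norm_pos_iff.mp (hε.trans_le hfz)
    exact ⟨(hdz.sub_const c).inv hfc, by simpa [φ] using inv_anti₀ hε hfz⟩
  have hφ : MeromorphicAt φ x := by
    refine MeromorphicAt.update_iff.mp (Complex.differentiableOn_update_limUnder_of_bddAbove hs
      (fun z hz => (hsφ z hz).1.differentiableWithinAt) ⟨ε⁻¹, ?_⟩ |>.analyticAt hs).meromorphicAt
    rintro _ ⟨z, hz, rfl⟩
    exact (hsφ z hz).2
  convert (MeromorphicAt.const c x).add hφ.inv using 1
  ext z
  simp [φ]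

theorem exists_eventually_le_norm_sub_of_injOn {f : ℂ → ℂ} {x : ℂ} {U : Set ℂ} (hU : IsOpen U)
    (hx : U ∈ 𝓝[≠] x) (hd : DifferentiableOn ℂ f U) (hinj : InjOn f U) :
    ∃ c, ∃ ε > 0, ∀ᶠ z in 𝓝[≠] x, ε ≤ ‖f z - c‖ := by
  obtain ⟨p, hpU, hpx⟩ := Filter.nonempty_of_mem (inter_mem hx self_mem_nhdsWithin)
  obtain ⟨V, W, hV, hW, hVW⟩ := t2_separation_nhds hpx
  have hnc : ¬ ∀ᶠ z in 𝓝 p, f z = f p := fun h => by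
    have hev : ∀ᶠ z in 𝓝[≠] p, f z = f p ∧ z ∈ U ∧ z ≠ p :=
      (h.filter_mono nhdsWithin_le_nhds).and
        (inter_mem (mem_nhdsWithin_of_mem_nhds (hU.mem_nhds hpU)) self_mem_nhdsWithin)
    obtain ⟨z, hfz, hzU, hzp⟩ := hev.exists
    exact hzp (hinj hzU hpU hfz)
  have himg : f '' (U ∩ V) ∈ 𝓝 (f p) :=
    ((hd.analyticAt (hU.mem_nhds hpU)).eventually_constant_or_nhds_le_map_nhds.resolve_left hnc)
      (image_mem_map (inter_mem (hU.mem_nhds hpU) hV))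
  obtain ⟨ε, hε, hball⟩ := Metric.mem_nhds_iff.mp himg
  refine ⟨f p, ε, hε, mem_of_superset (inter_mem hx (mem_nhdsWithin_of_mem_nhds hW)) ?_⟩
  rintro z ⟨hzU, hzW⟩
  show ε ≤ ‖f z - f p‖
  by_contra! hlt
  obtain ⟨y, ⟨hyU, hyV⟩, hyz⟩ := hball (mem_ball_iff_norm.mpr hlt)
  exact hVW.ne_of_mem hyV hzW (hinj hyU hzU hyz)

theorem meromorphicAt_of_injOn {f : ℂ → ℂ} {x : ℂ} {U : Set ℂ} (hU : IsOpen U)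
    (hx : U ∈ 𝓝[≠] x) (hd : DifferentiableOn ℂ f U) (hinj : InjOn f U) : MeromorphicAt f x :=
  let ⟨_, _, hε, hfar⟩ := exists_eventually_le_norm_sub_of_injOn hU hx hd hinj
  meromorphicAt_of_eventually_le_norm_sub hε
    (mem_of_superset hx fun _ hz => hd.differentiableAt (hU.mem_nhds hz)) hfar

theorem eq_zero_of_tendsto_exp_of_add_one {G : ℂ → ℂ} {d : ℤ} {L : ℂ} (hL : L ≠ 0)
    (hG : ContinuousOn G {z | 0 < z.im}) (hshift : ∀ z, 0 < z.im → G (z + 1) = G z + d)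
    (hlim : Tendsto (fun z => exp (2 * π * I * G z)) I∞ (𝓝 L)) : d = 0 := by
  set E : ℂ → ℂ := fun z => exp (2 * π * I * G z)
  obtain ⟨Y, hY⟩ : ∃ Y, ∀ z : ℂ, Y ≤ z.im → E z / L ∈ slitPlane := by
    have h1 : L / L ∈ slitPlane := by simp [hL]
    obtain ⟨Y, hY⟩ := eventually_atTop.mp <| eventually_comap.mp <|
      (hlim.div_const L).eventually (isOpen_slitPlane.mem_nhds h1)
    exact ⟨Y, fun z hz => hY _ hz z rfl⟩
  set S := {z : ℂ | max Y 0 < z.im}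
  have hSpos : ∀ z ∈ S, 0 < z.im := fun z hz => (le_max_right _ _).trans_lt hz
  have hSslit : ∀ z ∈ S, E z / L ∈ slitPlane := fun z hz => hY z ((le_max_left _ _).trans hz.le)
  set Φ : ℂ → ℂ := fun z => 2 * π * I * G z - log (E z / L)
  have hΦexp : ∀ z ∈ S, exp (Φ z) = L := fun z hz => by
    rw [exp_sub, exp_log (slitPlane_ne_zero (hSslit z hz)), div_div_cancel₀ (exp_ne_zero _)]
  have hΦcont : ContinuousOn Φ S := fun z hz => by
    have hGz : ContinuousAt G z :=
      hG.continuousAt ((isOpen_lt continuous_const continuous_im).mem_nhds (hSpos z hz))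
    have hEz : ContinuousAt E z := (continuousAt_const.mul hGz).cexp
    exact ((continuousAt_const.mul hGz).sub
      ((hEz.div_const L).clog (hSslit z hz))).continuousWithinAt
  set z₀ : ℂ := (max Y 0 + 1 : ℝ) * I
  have hz₀ : z₀ ∈ S := show max Y 0 < z₀.im by simp [z₀]
  have hz₁ : z₀ + 1 ∈ S := by simpa [S, z₀] using hz₀
  have hconst : EqOn Φ (fun _ => Φ z₀) S :=
    isCoveringMap_exp.eqOn_of_comp_eqOn (convex_halfSpace_im_gt _).isPreconnected hΦcont
      continuousOn_const (fun z hz => Subtype.ext (by simp [hΦexp z hz, hΦexp z₀ hz₀])) hz₀ rfl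
  have hE : E (z₀ + 1) = E z₀ := by
    simp only [E, hshift z₀ (hSpos z₀ hz₀), mul_add, exp_add]
    rw [show 2 * π * I * (d : ℂ) = d * (2 * π * I) by ring, exp_int_mul_two_pi_mul_I, mul_one]
  have hΦ : Φ (z₀ + 1) = Φ z₀ + 2 * π * I * d := by
    simp only [Φ, hE, hshift z₀ (hSpos z₀ hz₀)]
    ring
  have : 2 * π * I * (d : ℂ) = 0 := by
    simpa using hΦ.symm.trans (hconst hz₁)
  exact_mod_cast (mul_eq_zero.mp this).resolve_left two_pi_I_ne_zero

/-- `exp (2πi g)` on the upper half-plane, extended by zero: this makes it `1`-periodic on all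
of `ℂ`, as `Function.Periodic.cuspFunction` requires. -/
noncomputable def halfPlaneExp (g : ℂ → ℂ) : ℂ → ℂ :=
  {z : ℂ | 0 < z.im}.indicator fun z => exp (2 * π * I * g z)

section HalfPlaneExp

variable {g : ℂ → ℂ}

theorem add_intCast_of_add_one (hper : ∀ z : ℂ, 0 < z.im → g (z + 1) = g z + 1) (n : ℤ)
    {z : ℂ} (hz : 0 < z.im) : g (z + n) = g z + n := by
  induction n using Int.induction_on with
  | zero => simp
  | succ n ih =>
    push_cast at ih ⊢
    rw [← add_assoc, hper _ (by simpa using hz), ih]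
    ring
  | pred n ih =>
    have h := hper (z + (-n - 1 : ℤ)) (by simpa using hz)
    push_cast at h ih ⊢
    rw [show z + (-n - 1) + 1 = z + -n by ring, ih] at h
    linear_combination -h

theorem halfPlaneExp_of_im_pos {z : ℂ} (hz : 0 < z.im) :
    halfPlaneExp g z = exp (2 * π * I * g z) :=
  indicator_of_mem (show z ∈ {z : ℂ | 0 < z.im} from hz) _

theorem periodic_halfPlaneExp (hper : ∀ z : ℂ, 0 < z.im → g (z + 1) = g z + 1) :
    Periodic (halfPlaneExp g) 1 := by
  intro z
  by_cases hz : 0 < z.im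
  · rw [halfPlaneExp_of_im_pos (by simpa using hz), halfPlaneExp_of_im_pos hz, hper z hz,
      mul_add, exp_add, mul_one, exp_two_pi_mul_I, mul_one]
  · simp [halfPlaneExp, hz]

theorem differentiableAt_halfPlaneExp (hdiff : DifferentiableOn ℂ g {z : ℂ | 0 < z.im})
    {z : ℂ} (hz : 0 < z.im) : DifferentiableAt ℂ (halfPlaneExp g) z := by
  have hU : {z : ℂ | 0 < z.im} ∈ 𝓝 z := (isOpen_lt continuous_const continuous_im).mem_nhds hz
  exact ((differentiableAt_const _).mul (hdiff.differentiableAt hU)).cexp.congr_of_eventuallyEq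
    (mem_of_superset hU fun w hw => halfPlaneExp_of_im_pos hw)

theorem im_invQParam_one_pos {q : ℂ} (hq : q ∈ ball (0 : ℂ) 1 \ {0}) : 0 < (invQParam 1 q).im :=
  im_invQParam_pos_of_norm_lt_one one_pos (mem_ball_zero_iff.mp hq.1) hq.2

theorem cuspFunction_halfPlaneExp {q : ℂ} (hq : q ∈ ball (0 : ℂ) 1 \ {0}) :
    cuspFunction 1 (halfPlaneExp g) q = exp (2 * π * I * g (invQParam 1 q)) := by
  rw [cuspFunction_eq_of_nonzero _ _ hq.2, halfPlaneExp_of_im_pos (im_invQParam_one_pos hq)]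

theorem differentiableOn_cuspFunction_halfPlaneExp
    (hdiff : DifferentiableOn ℂ g {z : ℂ | 0 < z.im})
    (hper : ∀ z : ℂ, 0 < z.im → g (z + 1) = g z + 1) :
    DifferentiableOn ℂ (cuspFunction 1 (halfPlaneExp g)) (ball 0 1 \ {0}) := fun q hq => by
  have h := differentiableAt_cuspFunction one_ne_zero (periodic_halfPlaneExp hper)
    (differentiableAt_halfPlaneExp hdiff (im_invQParam_one_pos hq))
  rw [qParam_right_inv one_ne_zero hq.2] at h
  exact h.differentiableWithinAt

theorem injOn_cuspFunction_halfPlaneExp (hinj : InjOn g {z : ℂ | 0 < z.im})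
    (hper : ∀ z : ℂ, 0 < z.im → g (z + 1) = g z + 1) :
    InjOn (cuspFunction 1 (halfPlaneExp g)) (ball 0 1 \ {0}) := fun q₁ hq₁ q₂ hq₂ hq => by
  rw [cuspFunction_halfPlaneExp hq₁, cuspFunction_halfPlaneExp hq₂,
    exp_eq_exp_iff_exists_int] at hq
  obtain ⟨n, hn⟩ := hq
  have hz₂ := im_invQParam_one_pos hq₂
  have hgz : g (invQParam 1 q₁) = g (invQParam 1 q₂ + n) := by
    rw [add_intCast_of_add_one hper n hz₂]
    apply mul_left_cancel₀ two_pi_I_ne_zero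
    linear_combination hn
  have hz : invQParam 1 q₁ = invQParam 1 q₂ + n :=
    hinj (im_invQParam_one_pos hq₁) (show 0 < (invQParam 1 q₂ + n).im by simpa using hz₂) hgz
  rw [← qParam_right_inv one_ne_zero hq₁.2, ← qParam_right_inv one_ne_zero hq₂.2, hz]
  simp only [qParam, ofReal_one, div_one]
  exact exp_eq_exp_iff_exists_int.mpr ⟨n, by ring⟩

theorem exists_cuspFunction_halfPlaneExp_eq_zpow_mul
    (hdiff : DifferentiableOn ℂ g {z : ℂ | 0 < z.im}) (hinj : InjOn g {z : ℂ | 0 < z.im})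
    (hper : ∀ z : ℂ, 0 < z.im → g (z + 1) = g z + 1) :
    ∃ k : ℤ, ∃ u : ℂ → ℂ, AnalyticAt ℂ u 0 ∧ u 0 ≠ 0 ∧
      ∀ᶠ q in 𝓝[≠] 0, cuspFunction 1 (halfPlaneExp g) q = q ^ k * u q := by
  have hU : ball (0 : ℂ) 1 \ {0} ∈ 𝓝[≠] 0 := sdiff_mem_nhdsWithin_compl (ball_mem_nhds _ one_pos) _
  have hmero := meromorphicAt_of_injOn (isOpen_ball.sdiff isClosed_singleton) hU
    (differentiableOn_cuspFunction_halfPlaneExp hdiff hper)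
    (injOn_cuspFunction_halfPlaneExp hinj hper)
  have hne : meromorphicOrderAt (cuspFunction 1 (halfPlaneExp g)) 0 ≠ ⊤ := by
    rw [Ne, meromorphicOrderAt_eq_top_iff]
    intro h
    obtain ⟨q, hq0, hq⟩ := (h.and hU).exists
    exact exp_ne_zero _ ((cuspFunction_halfPlaneExp hq).symm.trans hq0)
  obtain ⟨k, hk⟩ := WithTop.ne_top_iff_exists.mp hne
  obtain ⟨u, hu, hu0, hHu⟩ := (meromorphicOrderAt_eq_int_iff hmero).mp hk.symm
  exact ⟨k, u, hu, hu0, by simpa using hHu⟩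

theorem eq_one_of_cuspFunction_halfPlaneExp_eq_zpow_mul
    (hdiff : DifferentiableOn ℂ g {z : ℂ | 0 < z.im})
    (hper : ∀ z : ℂ, 0 < z.im → g (z + 1) = g z + 1) {k : ℤ} {u : ℂ → ℂ}
    (hu : ContinuousAt u 0) (hu0 : u 0 ≠ 0)
    (hHu : ∀ᶠ q in 𝓝[≠] 0, cuspFunction 1 (halfPlaneExp g) q = q ^ k * u q) : k = 1 := by
  have hlim : Tendsto (fun z => exp (2 * π * I * (g z - k * z))) I∞ (𝓝 (u 0)) := by
    refine (hu.tendsto.comp (tendsto_nhds_of_tendsto_nhdsWithin (qParam_tendsto one_pos))).congr' ?_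
    filter_upwards [(qParam_tendsto one_pos).eventually hHu,
      tendsto_comap.eventually (eventually_gt_atTop 0)] with z hz him
    rw [eq_cuspFunction one_ne_zero (periodic_halfPlaneExp hper), halfPlaneExp_of_im_pos him]
      at hz
    rw [comp_apply, mul_sub, exp_sub, hz, qParam, ofReal_one, div_one, ← exp_int_mul]
    field_simp
  have hd := eq_zero_of_tendsto_exp_of_add_one (G := fun z => g z - k * z) (d := 1 - k) hu0
    (fun z hz => ((hdiff z hz).continuousWithinAt.sub (continuousWithinAt_const.mul
      continuousWithinAt_id))) (fun z hz => by rw [hper z hz]; push_cast; ring) hlim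
  omega

theorem tendsto_halfPlaneExp_zero (hdiff : DifferentiableOn ℂ g {z : ℂ | 0 < z.im})
    (hinj : InjOn g {z : ℂ | 0 < z.im}) (hper : ∀ z : ℂ, 0 < z.im → g (z + 1) = g z + 1) :
    ZeroAtFilter I∞ (halfPlaneExp g) := by
  obtain ⟨k, u, hu, hu0, hHu⟩ := exists_cuspFunction_halfPlaneExp_eq_zpow_mul hdiff hinj hper
  obtain rfl := eq_one_of_cuspFunction_halfPlaneExp_eq_zpow_mul hdiff hper hu.continuousAt hu0 hHu
  have hH : Tendsto (cuspFunction 1 (halfPlaneExp g)) (𝓝[≠] 0) (𝓝 0) := by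
    have h : Tendsto (fun q => q * u q) (𝓝[≠] 0) (𝓝 0) := by
      simpa using (continuousAt_id.fun_mul hu.continuousAt).tendsto.mono_left nhdsWithin_le_nhds
    exact h.congr' (hHu.mono fun q hq => by rw [hq, zpow_one])
  exact (hH.comp (qParam_tendsto one_pos)).congr
    (eq_cuspFunction one_ne_zero (periodic_halfPlaneExp hper))

end HalfPlaneExp

/-- If `g : ℍ → ℂ` is injective holomorphic with `g(z+1) = g(z)+1`, then the induced map
`h` on the punctured unit disk with `h (exp (2πi z)) = exp (2πi g z)` is well-defined,
holomorphic and injective on the punctured disk, and extends holomorphically to `0`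
with `h 0 = 0`. -/
theorem stmt2 (g : ℂ → ℂ)
    (hdiff : DifferentiableOn ℂ g {z : ℂ | 0 < z.im})
    (hinj : Set.InjOn g {z : ℂ | 0 < z.im})
    (hper : ∀ z : ℂ, 0 < z.im → g (z + 1) = g z + 1) :
    ∃ h : ℂ → ℂ,
      DifferentiableOn ℂ h (Metric.ball (0 : ℂ) 1) ∧
      Set.InjOn h (Metric.ball (0 : ℂ) 1 \ {0}) ∧
      h 0 = 0 ∧
      ∀ z : ℂ, 0 < z.im →
        h (Complex.exp (2 * Real.pi * Complex.I * z)) =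
          Complex.exp (2 * Real.pi * Complex.I * g z) := by
  have hF := periodic_halfPlaneExp hper
  have hzero := tendsto_halfPlaneExp_zero hdiff hinj hper
  have hhol : ∀ᶠ z in I∞, DifferentiableAt ℂ (halfPlaneExp g) z :=
    (tendsto_comap.eventually (eventually_gt_atTop 0)).mono fun _ =>
      differentiableAt_halfPlaneExp hdiff
  refine ⟨cuspFunction 1 (halfPlaneExp g), fun q hq => ?_,
    injOn_cuspFunction_halfPlaneExp hinj hper, cuspFunction_zero_of_zero_at_inf one_pos hzero,
    fun z hz => ?_⟩
  · rcases eq_or_ne q 0 with rfl | hq0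
    · exact (differentiableAt_cuspFunction_zero one_pos hF hhol
        hzero.boundedAtFilter).differentiableWithinAt
    · exact (differentiableOn_cuspFunction_halfPlaneExp hdiff hper).differentiableAt
        ((isOpen_ball.sdiff isClosed_singleton).mem_nhds ⟨hq, hq0⟩) |>.differentiableWithinAt
  · simpa [qParam, halfPlaneExp_of_im_pos hz] using eq_cuspFunction one_ne_zero hF z
end

section
/- There exists a universal constant C > 0 such that: for every injective holomorphic map g : ℍ → ℂ satisfying g(z+1) = g(z)+1, there exists α ∈ ℂ such that for all z ∈ ℍ with Im z ≥ C, |g(z) - z + α| ≤ C·exp(-2π·Im z). -/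
/-!
Bloch's trick combined with the quantitative open mapping theorem shows that the image of a small
disc around a point where `|g'|` is large contains a disc of proportional radius; since
`g (z + 1) = g z + 1` with `g` injective, that image cannot contain both `g z₀` and `g z₀ + 1`, so
`|g'| ≤ 640` on `Im z ≥ 1/2`. Now `g' - 1` is `1`-periodic and bounded there, so as a function of
`q = exp (2πiz)` it is holomorphic on a disc and vanishes at `q = 0` (the mean of `g' - 1` over a
period is `0`); Schwarz's lemma gives `|g' - 1| = O(exp (-2π Im z))` uniformly in `g`. Integrating
vertically, `g z - z` converges to a constant `-α` as `Im z → ∞` at the same rate.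
-/

open Complex Metric Set Function Filter Topology Asymptotics
open scoped Real

theorem ball_subset_image_of_norm_deriv_le {g : ℂ → ℂ} {z₀ : ℂ} {r : ℝ} (hr : 0 < r)
    (hd : DifferentiableOn ℂ g (ball z₀ r))
    (hbd : ∀ w ∈ ball z₀ r, ‖deriv g w‖ ≤ 2 * ‖deriv g z₀‖) :
    ball (g z₀) (‖deriv g z₀‖ * r / 80) ⊆ g '' ball z₀ r := by
  set μ := ‖deriv g z₀‖
  rcases (norm_nonneg (deriv g z₀)).eq_or_lt with hμ | hμ
  · simp [μ, ← hμ]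
  have hz₀ : z₀ ∈ ball z₀ r := mem_ball_self hr
  have hderiv : ∀ u ∈ ball z₀ r, ‖deriv g u - deriv g z₀‖ ≤ 3 * μ / r * ‖u - z₀‖ := by
    intro u hu
    have hmaps : MapsTo (deriv g) (ball z₀ r) (closedBall (deriv g z₀) (3 * μ)) := fun w hw => by
      rw [mem_closedBall, dist_eq_norm]
      linarith [norm_sub_le (deriv g w) (deriv g z₀), hbd w hw]
    simpa only [dist_eq_norm] using
      dist_le_div_mul_dist_of_mapsTo_ball (hd.deriv isOpen_ball) hmaps hu
  set s := r / 20 with hs_def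
  have hs : 0 < s := by positivity
  have hsr : closedBall z₀ s ⊆ ball z₀ r := closedBall_subset_ball (by linarith)
  have hsphere : ∀ w ∈ sphere z₀ s, μ * s / 2 ≤ ‖g w - g z₀‖ := by
    intro w hw
    set e : ℂ → ℂ := fun u => g u - deriv g z₀ * u
    have he : ‖e w - e z₀‖ ≤ 3 * μ / 20 * ‖w - z₀‖ := by
      refine (convex_closedBall z₀ s).norm_image_sub_le_of_norm_hasDerivWithin_le
        (f' := fun u => deriv g u - deriv g z₀) (fun u hu => ?_) (fun u hu => ?_)
        (mem_closedBall_self hs.le) (sphere_subset_closedBall hw)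
      · exact (((hd.differentiableAt (isOpen_ball.mem_nhds (hsr hu))).hasDerivAt).sub
          ((hasDerivAt_id u).const_mul _) |>.congr_deriv (by simp)).hasDerivWithinAt
      · calc ‖deriv g u - deriv g z₀‖ ≤ 3 * μ / r * ‖u - z₀‖ := hderiv u (hsr hu)
          _ ≤ 3 * μ / r * s := by gcongr; exact mem_closedBall_iff_norm.mp hu
          _ = 3 * μ / 20 := by rw [hs_def]; field_simp
    have hwz : ‖w - z₀‖ = s := mem_sphere_iff_norm.mp hw
    have hsplit : g w - g z₀ = deriv g z₀ * (w - z₀) + (e w - e z₀) := by simp only [e]; ring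
    have hlin : ‖deriv g z₀ * (w - z₀)‖ = μ * s := by rw [norm_mul, hwz]
    have := norm_sub_norm_le (deriv g z₀ * (w - z₀)) (-(e w - e z₀))
    rw [sub_neg_eq_add, ← hsplit, norm_neg, hlin] at this
    rw [hwz] at he
    nlinarith
  have hnonconst : ∃ᶠ w in 𝓝 z₀, g w ≠ g z₀ :=
    (((hd.differentiableAt (isOpen_ball.mem_nhds hz₀)).hasDerivAt.eventually_ne
      (norm_pos_iff.mp hμ)).frequently).filter_mono nhdsWithin_le_nhds
  calc ball (g z₀) (μ * r / 80) = ball (g z₀) (μ * s / 2 / 2) := by congr 1; ring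
    _ ⊆ g '' closedBall z₀ s :=
      (hd.diffContOnCl_ball hsr).ball_subset_image_closedBall hs hsphere hnonconst
    _ ⊆ g '' ball z₀ r := image_mono hsr

/-- Bloch's trick: maximising `‖deriv g w‖ * (ρ - dist w z)` over the disc produces a smaller disc
on which `‖deriv g‖` is at most twice its value at the centre. -/
theorem exists_ball_subset_image_of_differentiableOn {g : ℂ → ℂ} {U : Set ℂ} (hU : IsOpen U)
    (hd : DifferentiableOn ℂ g U) {z : ℂ} {ρ : ℝ} (hρ : 0 ≤ ρ) (hz : closedBall z ρ ⊆ U) :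
    ∃ z₀ ∈ closedBall z ρ, ∃ r ≤ ρ / 2, ball z₀ r ⊆ closedBall z ρ ∧
      ball (g z₀) (‖deriv g z‖ * ρ / 160) ⊆ g '' ball z₀ r := by
  set φ : ℂ → ℝ := fun w => ‖deriv g w‖ * (ρ - dist w z)
  have hφ : ContinuousOn φ (closedBall z ρ) :=
    (((hd.deriv hU).continuousOn.mono hz).norm).mul (continuous_const.sub
      (continuous_id.dist continuous_const)).continuousOn
  obtain ⟨z₀, hz₀, hmax⟩ :=
    (isCompact_closedBall z ρ).exists_isMaxOn ⟨z, mem_closedBall_self hρ⟩ hφ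
  set μ := ‖deriv g z₀‖
  set r := (ρ - dist z₀ z) / 2 with hr_def
  have hφz₀ : φ z₀ = μ * (2 * r) := by simp only [φ, μ, hr_def]; ring
  have hφz : ‖deriv g z‖ * ρ ≤ μ * (2 * r) := by
    simpa [φ, hφz₀] using hmax (mem_closedBall_self hρ)
  have hsub : ball z₀ r ⊆ closedBall z ρ := fun w hw => by
    rw [mem_closedBall]
    linarith [dist_triangle w z₀ z, mem_ball.mp hw, mem_closedBall.mp hz₀]
  refine ⟨z₀, hz₀, r, by linarith [dist_nonneg (x := z₀) (y := z)], hsub, ?_⟩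
  rcases (show 0 ≤ r by linarith [mem_closedBall.mp hz₀]).eq_or_lt with hr | hr
  · rw [ball_eq_empty.mpr (by rw [← hr] at hφz; linarith)]
    exact empty_subset _
  have hbd : ∀ w ∈ ball z₀ r, ‖deriv g w‖ ≤ 2 * μ := fun w hw => by
    have hw' : r < ρ - dist w z := by linarith [dist_triangle w z₀ z, mem_ball.mp hw]
    have hφw : φ w ≤ φ z₀ := hmax (hsub hw)
    rw [hφz₀] at hφw
    nlinarith [norm_nonneg (deriv g w)]
  calc ball (g z₀) (‖deriv g z‖ * ρ / 160) ⊆ ball (g z₀) (μ * r / 80) :=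
        ball_subset_ball (by linarith)
    _ ⊆ g '' ball z₀ r := ball_subset_image_of_norm_deriv_le hr (hd.mono (hsub.trans hz)) hbd

theorem closedBall_subset_setOf_im_pos {z : ℂ} {ρ : ℝ} (hρ : ρ < z.im) :
    closedBall z ρ ⊆ {w : ℂ | 0 < w.im} := fun w hw => by
  have := (abs_le.mp ((abs_im_le_norm (w - z)).trans (mem_closedBall_iff_norm.mp hw))).1
  simp only [sub_im] at this
  show 0 < w.im
  linarith

/-- The image of a disc of radius at most `1/8` cannot contain both `g z₀` and
`g z₀ + 1 = g (z₀ + 1)`. -/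
theorem norm_deriv_le_of_injOn_of_add_one {g : ℂ → ℂ}
    (hd : DifferentiableOn ℂ g {z : ℂ | 0 < z.im}) (hinj : InjOn g {z : ℂ | 0 < z.im})
    (hper : ∀ z : ℂ, 0 < z.im → g (z + 1) = g z + 1) {z : ℂ} (hz : 1 / 2 ≤ z.im) :
    ‖deriv g z‖ ≤ 640 := by
  have hU : closedBall z (1 / 4) ⊆ {w : ℂ | 0 < w.im} :=
    closedBall_subset_setOf_im_pos (by linarith)
  obtain ⟨z₀, hz₀, r, hr, hsub, himage⟩ :=
    exists_ball_subset_image_of_differentiableOn (isOpen_lt continuous_const continuous_im) hd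
      (by norm_num) hU
  by_contra! hbig
  obtain ⟨w, hw, hgw⟩ : g z₀ + 1 ∈ g '' ball z₀ r :=
    himage (by rw [mem_ball_iff_norm, add_sub_cancel_left, norm_one]; linarith)
  have him : 0 < z₀.im := hU hz₀
  have hw1 : w = z₀ + 1 :=
    hinj (hU (hsub hw)) (by simpa using him) (by rw [hgw, hper z₀ him])
  rw [hw1, mem_ball_iff_norm, add_sub_cancel_left, norm_one] at hw
  linarith

theorem eventually_im_gt (y : ℝ) : ∀ᶠ z : ℂ in comap im atTop, y < z.im :=
  eventually_comap.mpr (eventually_gt_atTop y |>.mono fun _ hy _ hz => hz ▸ hy)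

instance comap_im_atTop_neBot : (comap im atTop).NeBot :=
  atTop_neBot.comap_of_surj fun y => ⟨y * I, by simp⟩

namespace Function.Periodic

variable {y₀ : ℝ}

theorem exists_tendsto_and_norm_sub_le {f : ℂ → ℂ} {M : ℝ} (hf : Periodic f 1)
    (hd : ∀ z : ℂ, y₀ < z.im → DifferentiableAt ℂ f z) (hM : ∀ z : ℂ, y₀ < z.im → ‖f z‖ ≤ M) :
    ∃ c, Tendsto f (comap im atTop) (𝓝 c) ∧
      ∀ z : ℂ, y₀ < z.im →
        ‖f z - c‖ ≤ 2 * M * Real.exp (2 * π * y₀) * Real.exp (-(2 * π * z.im)) := by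
  have hev := eventually_im_gt y₀
  have hhol : ∀ᶠ z in comap im atTop, DifferentiableAt ℂ f z := hev.mono hd
  have hbd : BoundedAtFilter (comap im atTop) f :=
    IsBigO.of_bound M (hev.mono fun z hz => by simpa using hM z hz)
  set Φ := cuspFunction 1 f with hΦ
  have hlim := tendsto_at_I_inf one_pos hf hhol hbd
  refine ⟨Φ 0, hlim, fun z hz => ?_⟩
  have hΦ0 : ‖Φ 0‖ ≤ M := le_of_tendsto hlim.norm (hev.mono hM)
  -- in the coordinate `q = exp (2πiz)`, the half-plane `y₀ < im z` is the punctured disc of radius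
  -- `exp (-2πy₀)`
  have him : ∀ q ∈ ball (0 : ℂ) (Real.exp (-(2 * π * y₀))), q ≠ 0 →
      y₀ < (invQParam 1 q).im := fun q hq hq0 => by
    rw [mem_ball_zero_iff, ← qParam_right_inv one_ne_zero hq0, norm_qParam,
      Real.exp_lt_exp] at hq
    nlinarith [Real.pi_pos]
  have hΦd : DifferentiableOn ℂ Φ (ball 0 (Real.exp (-(2 * π * y₀)))) := fun q hq => by
    rcases eq_or_ne q 0 with rfl | hq0
    · exact (differentiableAt_cuspFunction_zero one_pos hf hhol hbd).differentiableWithinAt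
    · have := differentiableAt_cuspFunction one_ne_zero hf (hd _ (him q hq hq0))
      rw [qParam_right_inv one_ne_zero hq0] at this
      exact this.differentiableWithinAt
  have hmaps : MapsTo Φ (ball 0 (Real.exp (-(2 * π * y₀)))) (closedBall (Φ 0) (2 * M)) :=
    fun q hq => by
      rw [mem_closedBall, dist_eq_norm]
      rcases eq_or_ne q 0 with rfl | hq0
      · rw [sub_self, norm_zero]
        linarith [(norm_nonneg _).trans hΦ0]
      · have : ‖Φ q‖ ≤ M := by
          rw [hΦ, cuspFunction_eq_of_nonzero _ _ hq0]; exact hM _ (him q hq hq0)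
        linarith [norm_sub_le (Φ q) (Φ 0)]
  have hqz : qParam 1 z ∈ ball (0 : ℂ) (Real.exp (-(2 * π * y₀))) := by
    rw [mem_ball_zero_iff, norm_qParam, Real.exp_lt_exp]
    nlinarith [Real.pi_pos]
  have hΦz : Φ (qParam 1 z) = f z := eq_cuspFunction one_ne_zero hf z
  have := dist_le_div_mul_dist_of_mapsTo_ball hΦd hmaps hqz
  rw [hΦz, dist_eq_norm, dist_zero_right, norm_qParam] at this
  calc ‖f z - Φ 0‖ ≤ 2 * M / Real.exp (-(2 * π * y₀)) * Real.exp (-2 * π * z.im / 1) := this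
    _ = 2 * M * Real.exp (2 * π * y₀) * Real.exp (-(2 * π * z.im)) := by
      rw [Real.exp_neg, div_inv_eq_mul, div_one, neg_mul, neg_mul]

theorem eq_zero_of_tendsto_deriv {F : ℂ → ℂ} (hF : Periodic F 1)
    (hd : ∀ z : ℂ, y₀ < z.im → DifferentiableAt ℂ F z) {c : ℂ}
    (hc : Tendsto (deriv F) (comap im atTop) (𝓝 c)) : c = 0 := by
  refine eq_of_forall_dist_le fun ε hε => ?_
  obtain ⟨Y, hY⟩ := eventually_atTop.mp <| eventually_comap.mp <|
    (eventually_im_gt y₀).and (hc.eventually (closedBall_mem_nhds c hε))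
  set y := max Y y₀ + 1
  have hS : ∀ w ∈ {w : ℂ | y ≤ w.im}, y₀ < w.im ∧ deriv F w ∈ closedBall c ε := fun w hw =>
    hY w.im (by linarith [le_max_left Y y₀, show y ≤ w.im from hw]) w rfl
  -- `F (w + 1) = F w`, so the increment of `F w - c * w` along `[y * I, y * I + 1]` is `-c`
  have := (convex_halfSpace_im_ge y).norm_image_sub_le_of_norm_hasDerivWithin_le
    (f := fun w => F w - c * w) (f' := fun w => deriv F w - c)
    (fun w hw => (((hd w (hS w hw).1).hasDerivAt.sub ((hasDerivAt_id w).const_mul c)).congr_deriv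
      (by simp)).hasDerivWithinAt)
    (fun w hw => by simpa [dist_eq_norm] using (hS w hw).2)
    (x := y * I) (y := y * I + 1) (by simp) (by simp)
  rw [hF, add_sub_cancel_left, norm_one, mul_one] at this
  simpa [dist_zero_right, mul_add] using this

end Function.Periodic

theorem exists_norm_sub_le_of_norm_sub_le_add {α E : Type*} [NormedAddCommGroup E]
    [CompleteSpace E] {l : Filter α} [l.NeBot] {S : Set α} (hS : S ∈ l) {F : α → E} {B : α → ℝ}
    (hB : Tendsto B l (𝓝 0)) (hF : ∀ x ∈ S, ∀ y ∈ S, ‖F x - F y‖ ≤ B x + B y) :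
    ∃ L, ∀ x ∈ S, ‖F x - L‖ ≤ B x := by
  have hSB : ∀ ε > 0, ∀ᶠ x in l, x ∈ S ∧ B x < ε := fun ε hε =>
    (Filter.inter_mem hS (hB.eventually (gt_mem_nhds hε)))
  have hcauchy : Cauchy (map F l) := by
    refine Metric.cauchy_iff.mpr ⟨inferInstance, fun ε hε => ?_⟩
    refine ⟨F '' {x | x ∈ S ∧ B x < ε / 2}, image_mem_map (hSB _ (half_pos hε)), ?_⟩
    rintro _ ⟨x, hx, rfl⟩ _ ⟨y, hy, rfl⟩
    rw [dist_eq_norm]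
    linarith [hF x hx.1 y hy.1, hx.2, hy.2]
  obtain ⟨L, hL⟩ := CompleteSpace.complete hcauchy
  refine ⟨L, fun x hx => le_of_tendsto_of_tendsto ((tendsto_const_nhds.sub hL).norm)
    (by simpa using tendsto_const_nhds.add hB) ?_⟩
  filter_upwards [hS] with y hy using hF x hx y hy

section ExpDecay

variable {F : ℂ → ℂ} {y₀ K : ℝ}

theorem norm_sub_le_of_norm_deriv_le_exp_vertical (hK₀ : 0 ≤ K)
    (hd : ∀ z : ℂ, y₀ < z.im → DifferentiableAt ℂ F z)
    (hK : ∀ z : ℂ, y₀ < z.im → ‖deriv F z‖ ≤ K * Real.exp (-(2 * π * z.im)))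
    {z : ℂ} (hz : y₀ < z.im) {t : ℝ} (ht : 0 ≤ t) :
    ‖F (z + t * I) - F z‖ ≤ K / (2 * π) * Real.exp (-(2 * π * z.im)) := by
  have him : ∀ s : ℝ, (z + s * I).im = z.im + s := fun s => by simp
  have hF : ∀ s : ℝ, 0 ≤ s → HasDerivAt (fun s : ℝ => F (z + s * I) - F z)
      (deriv F (z + s * I) * I) s := fun s hs => by
    have hFs := (hd _ (by rw [him]; linarith)).hasDerivAt
    have := (hFs.comp (s : ℂ) (((hasDerivAt_id (s : ℂ)).mul_const I).const_add z)).comp_ofReal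
    simpa using this.sub_const (F z)
  -- the bound is the primitive of `s ↦ K exp (-2π (im z + s))` vanishing at `0`
  set B : ℝ → ℝ := fun s =>
    K / (2 * π) * (Real.exp (-(2 * π * z.im)) - Real.exp (-(2 * π * (z.im + s))))
  have hB : ∀ s, HasDerivAt B (K * Real.exp (-(2 * π * (z.im + s)))) s := fun s => by
    have hlin : HasDerivAt (fun s : ℝ => -(2 * π * (z.im + s))) (-(2 * π)) s := by
      simpa [neg_mul] using ((hasDerivAt_id s).const_add z.im).const_mul (-(2 * π))
    exact ((hlin.exp.const_sub _).const_mul (K / (2 * π))).congr_deriv (by field_simp)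
  have := image_norm_le_of_norm_deriv_right_le_deriv_boundary (a := 0) (b := t)
    (fun s hs => (hF s hs.1).continuousAt.continuousWithinAt)
    (fun s hs => (hF s hs.1).hasDerivWithinAt) (by simp [B]) hB
    (fun s hs => by
      have := hK _ (show y₀ < (z + s * I).im by rw [him]; linarith [hs.1])
      rw [him] at this
      simpa using this)
    (right_mem_Icc.mpr ht)
  calc _ ≤ B t := this
    _ ≤ K / (2 * π) * Real.exp (-(2 * π * z.im)) := by
      have := Real.exp_pos (-(2 * π * (z.im + t)))
      have : 0 ≤ K / (2 * π) := by positivity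
      simp only [B]; nlinarith

theorem norm_sub_le_of_norm_deriv_le_exp (hK₀ : 0 ≤ K)
    (hd : ∀ z : ℂ, y₀ < z.im → DifferentiableAt ℂ F z)
    (hK : ∀ z : ℂ, y₀ < z.im → ‖deriv F z‖ ≤ K * Real.exp (-(2 * π * z.im)))
    {z w : ℂ} (hz : y₀ < z.im) (hw : y₀ < w.im) :
    ‖F z - F w‖ ≤
      K / (2 * π) * Real.exp (-(2 * π * z.im)) + K / (2 * π) * Real.exp (-(2 * π * w.im)) := by
  -- move `z` and `w` up to a common height `T`, where `F` is `K exp (-2πT)`-Lipschitz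
  have hmove : ∀ T ≥ max z.im w.im, ‖F z - F w‖ ≤
      K / (2 * π) * Real.exp (-(2 * π * z.im)) + K / (2 * π) * Real.exp (-(2 * π * w.im)) +
        K * Real.exp (-(2 * π * T)) * ‖z - w - (z.im - w.im : ℝ) * I‖ := fun T hT => by
    have hzT : z.im ≤ T := (le_max_left _ _).trans hT
    have hwT : w.im ≤ T := (le_max_right _ _).trans hT
    have hup : ∀ u ∈ {u : ℂ | T ≤ u.im}, ‖deriv F u‖ ≤ K * Real.exp (-(2 * π * T)) := fun u hu => by
      refine (hK u (by linarith [show T ≤ u.im from hu])).trans ?_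
      gcongr
      exact hu
    set z' := z + (T - z.im : ℝ) * I
    set w' := w + (T - w.im : ℝ) * I
    have hLip := (convex_halfSpace_im_ge T).norm_image_sub_le_of_norm_deriv_le
      (fun u hu => hd u (by linarith [show T ≤ u.im from hu])) hup
      (x := w') (y := z') (by simp [w']) (by simp [z'])
    have hdiff : z' - w' = z - w - (z.im - w.im : ℝ) * I := by
      simp only [z', w']; push_cast; ring
    rw [hdiff] at hLip
    calc ‖F z - F w‖ = ‖-(F z' - F z) + (F w' - F w) + (F z' - F w')‖ := by congr 1; ring
      _ ≤ ‖F z' - F z‖ + ‖F w' - F w‖ + ‖F z' - F w'‖ := by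
          simpa only [norm_neg] using norm_add₃_le (a := -(F z' - F z))
      _ ≤ _ := by
          gcongr
          · exact norm_sub_le_of_norm_deriv_le_exp_vertical hK₀ hd hK hz (sub_nonneg.mpr hzT)
          · exact norm_sub_le_of_norm_deriv_le_exp_vertical hK₀ hd hK hw (sub_nonneg.mpr hwT)
  have hexp : Tendsto (fun T => Real.exp (-(2 * π * T))) atTop (𝓝 0) :=
    Real.tendsto_exp_neg_atTop_nhds_zero.comp (tendsto_id.const_mul_atTop (by positivity))
  refine ge_of_tendsto ?_ (eventually_atTop.mpr ⟨_, hmove⟩)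
  simpa using tendsto_const_nhds.add ((hexp.const_mul K).mul_const _)

theorem Function.Periodic.exists_norm_sub_le_of_norm_deriv_le {M : ℝ} (hF : Periodic F 1)
    (hd : ∀ z : ℂ, y₀ < z.im → DifferentiableAt ℂ F z)
    (hM : ∀ z : ℂ, y₀ < z.im → ‖deriv F z‖ ≤ M) :
    ∃ α, ∀ z : ℂ, y₀ < z.im →
      ‖F z - α‖ ≤ M * Real.exp (2 * π * y₀) / π * Real.exp (-(2 * π * z.im)) := by
  have hopen : IsOpen {z : ℂ | y₀ < z.im} := isOpen_lt continuous_const continuous_im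
  have hF' : Periodic (deriv F) 1 := fun z => by
    rw [← deriv_comp_add_const]
    exact congrArg (deriv · z) (funext hF)
  have hdOn : DifferentiableOn ℂ F {z : ℂ | y₀ < z.im} := fun w hw =>
    (hd w hw).differentiableWithinAt
  have hd' : ∀ z : ℂ, y₀ < z.im → DifferentiableAt ℂ (deriv F) z := fun z hz =>
    (hdOn.deriv hopen).differentiableAt (hopen.mem_nhds hz)
  obtain ⟨c, hc, hdecay⟩ := hF'.exists_tendsto_and_norm_sub_le hd' hM
  obtain rfl := hF.eq_zero_of_tendsto_deriv hd hc
  simp only [sub_zero] at hdecay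
  have hM₀ : 0 ≤ M := (norm_nonneg _).trans (hM ((y₀ + 1) * I) (by simp))
  set K := 2 * M * Real.exp (2 * π * y₀)
  have hB : Tendsto (fun z : ℂ => K / (2 * π) * Real.exp (-(2 * π * z.im))) (comap im atTop)
      (𝓝 0) := by
    simpa using ((Real.tendsto_exp_neg_atTop_nhds_zero.comp
      (tendsto_id.const_mul_atTop (by positivity : 0 < 2 * π))).comp tendsto_comap).const_mul
        (K / (2 * π))
  obtain ⟨α, hα⟩ := exists_norm_sub_le_of_norm_sub_le_add (eventually_im_gt y₀) hB
    (fun z hz w hw => norm_sub_le_of_norm_deriv_le_exp (by positivity) hd hdecay hz hw)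
  refine ⟨α, fun z hz => (hα z hz).trans_eq ?_⟩
  simp only [K]
  field_simp

end ExpDecay

theorem exists_periodic_eqOn_sub_id {g : ℂ → ℂ} (hd : DifferentiableOn ℂ g {z : ℂ | 0 < z.im})
    (hper : ∀ z : ℂ, 0 < z.im → g (z + 1) = g z + 1) :
    ∃ F : ℂ → ℂ, Periodic F 1 ∧ (∀ z : ℂ, 0 < z.im → F z = g z - z) ∧
      ∀ z : ℂ, 0 < z.im → HasDerivAt F (deriv g z - 1) z := by
  have hopen : IsOpen {z : ℂ | 0 < z.im} := isOpen_lt continuous_const continuous_im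
  -- `Periodic` constrains all of `ℂ`, so `g - id` is extended by `0` to `im z ≤ 0`
  refine ⟨fun z => if 0 < z.im then g z - z else 0, fun z => ?_, fun z hz => if_pos hz,
    fun z hz => ?_⟩
  · by_cases hz : 0 < z.im
    · simp [hz, hper z hz]
    · simp [hz]
  · exact ((hd.differentiableAt (hopen.mem_nhds hz)).hasDerivAt.sub (hasDerivAt_id' z))
      |>.congr_of_eventuallyEq (eventually_of_mem (hopen.mem_nhds hz) fun w hw => if_pos hw)

theorem exp_pi_div_pi_lt : Real.exp π / π < 27 := by
  have h3 := Real.pi_gt_three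
  rw [div_lt_iff₀ (by positivity)]
  calc Real.exp π < Real.exp 4 := Real.exp_lt_exp.mpr (by linarith [Real.pi_lt_four])
    _ = Real.exp 1 ^ 4 := by rw [← Real.exp_nat_mul]; norm_num
    _ < 3 ^ 4 := by gcongr; exact Real.exp_one_lt_three
    _ = 27 * 3 := by norm_num
    _ < 27 * π := by gcongr

/-- There is a universal constant `C > 0` such that for every injective holomorphic
`g : ℍ → ℂ` with `g(z+1) = g(z)+1` there is `α ∈ ℂ` with
`|g z - z + α| ≤ C exp(-2π Im z)` whenever `Im z ≥ C`. -/
theorem stmt3 :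
    ∃ C : ℝ, 0 < C ∧
      ∀ g : ℂ → ℂ,
        DifferentiableOn ℂ g {z : ℂ | 0 < z.im} →
        Set.InjOn g {z : ℂ | 0 < z.im} →
        (∀ z : ℂ, 0 < z.im → g (z + 1) = g z + 1) →
        ∃ α : ℂ, ∀ z : ℂ, 0 < z.im → C ≤ z.im →
          ‖g z - z + α‖ ≤ C * Real.exp (-(2 * Real.pi * z.im)) := by
  refine ⟨20000, by norm_num, fun g hd hinj hper => ?_⟩
  obtain ⟨F, hFper, hFeq, hFderiv⟩ := exists_periodic_eqOn_sub_id hd hper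
  have hFM : ∀ z : ℂ, 1 / 2 < z.im → ‖deriv F z‖ ≤ 641 := fun z hz => by
    rw [(hFderiv z (by linarith)).deriv]
    linarith [norm_sub_le (deriv g z) 1, norm_deriv_le_of_injOn_of_add_one hd hinj hper hz.le,
      norm_one (α := ℂ)]
  obtain ⟨α, hα⟩ := hFper.exists_norm_sub_le_of_norm_deriv_le
    (fun z hz => (hFderiv z (by linarith)).differentiableAt) hFM
  refine ⟨-α, fun z hz hzC => ?_⟩
  have hαz := hα z (by linarith)
  rw [hFeq z hz, show 2 * π * (1 / 2) = π by ring, mul_div_assoc] at hαz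
  rw [← sub_eq_add_neg]
  refine hαz.trans (mul_le_mul_of_nonneg_right ?_ (Real.exp_pos _).le)
  linarith [exp_pi_div_pi_lt]
end

section
/- There exists a universal constant C > 0 such that: for every injective holomorphic map g : ℍ → ℂ satisfying g(z+1) = g(z)+1, and every z ∈ ℍ with Im z ≥ C, one has 1/C ≤ |g'(z)| ≤ C. -/
/-!
The image of a disc `B(z, r) ⊆ ℍ` with `r ≤ 1/2` is disjoint from its integer translates (by
injectivity and `g (w + k) = g w + k`) and lies in a horizontal band of height `2 r M`, `M` a bound
for `|g'|` on the disc; cutting along a period strip, its area is at most `2 r M`. By the Jacobian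
formula and the mean value property of `g'²` the area is at least `π r² |g' z|²`, so
`π r |g' z|² ≤ 2 M`. A bootstrap on horizontal strips turns this into `|g'| ≤ 8 / π` on
`Im z ≥ 2`. There `g'` is bounded, holomorphic and `1`-periodic, so `g' z = F (exp (2πiz))` with
`F` holomorphic on a disc, and the Schwarz lemma gives `|g' z - F 0| = O(exp (-2π Im z))`.
Since `g` gains exactly `1` along `[z, z + 1]`, the mean value inequality for `g - F 0 • id`
gives the same bound for `|1 - F 0|`, hence `|g' z - 1| ≤ 1/2` high enough up.
-/

open MeasureTheory Set Metric Real Filter Function Topology Pointwise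
open Function.Periodic (qParam invQParam cuspFunction)

section MeanValue

variable {E : Type*} [NormedAddCommGroup E] [NormedSpace ℂ E] [CompleteSpace E]

theorem ofReal_two_pi_mul_enorm_le_lintegral_circleMap {f : ℂ → E} {c : ℂ} {r : ℝ}
    (hf : DiffContOnCl ℂ f (ball c |r|)) :
    ENNReal.ofReal (2 * π) * ‖f c‖ₑ ≤ ∫⁻ θ in Ioo (-π) π, ‖f (circleMap c r θ)‖ₑ := by
  have hmean : (2 * π : ℝ) • f c = ∫ θ in (-π)..π, f (circleMap c r θ) := by
    rw [← hf.circleAverage, circleAverage_eq_integral_add (-π),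
      intervalIntegral.integral_comp_add_right (fun θ => f (circleMap c r θ)), smul_smul,
      mul_inv_cancel₀ (by positivity), one_smul]
    ring_nf
  calc ENNReal.ofReal (2 * π) * ‖f c‖ₑ = ‖(2 * π : ℝ) • f c‖ₑ := by
        rw [enorm_smul, Real.enorm_of_nonneg (by positivity)]
    _ ≤ ∫⁻ θ in Ioc (-π) π, ‖f (circleMap c r θ)‖ₑ := by
        rw [hmean, intervalIntegral.integral_of_le (by linarith [pi_pos])]
        exact enorm_integral_le_lintegral_enorm _
    _ = ∫⁻ θ in Ioo (-π) π, ‖f (circleMap c r θ)‖ₑ := setLIntegral_congr Ioo_ae_eq_Ioc.symm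

theorem Complex.add_polarCoord_symm (c : ℂ) (r θ : ℝ) :
    c + Complex.polarCoord.symm (r, θ) = circleMap c r θ := by
  rw [Complex.polarCoord_symm_apply, circleMap]
  push_cast
  rw [Complex.exp_mul_I]

theorem lintegral_Ioo_ofReal_id {R : ℝ} (hR : 0 ≤ R) :
    ∫⁻ r in Ioo 0 R, ENNReal.ofReal r = ENNReal.ofReal (R ^ 2 / 2) := by
  rw [← ofReal_integral_eq_lintegral_ofReal, ← integral_Ioc_eq_integral_Ioo,
    ← intervalIntegral.integral_of_le hR, integral_id]
  · ring_nf
  · exact continuous_id.integrableOn_Icc.mono_set Ioo_subset_Icc_self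
  · exact (ae_restrict_mem measurableSet_Ioo).mono fun r hr => hr.1.le

theorem ofReal_pi_mul_sq_mul_enorm_le_setLIntegral_ball {f : ℂ → E} {c : ℂ} {R : ℝ}
    (hR : 0 ≤ R) (hf : DifferentiableOn ℂ f (ball c R)) :
    ENNReal.ofReal (π * R ^ 2) * ‖f c‖ₑ ≤ ∫⁻ z in ball c R, ‖f z‖ₑ := by
  classical
  set F := (ball c R).indicator fun z => ‖f z‖ₑ
  set P := Complex.polarCoord.symm
  have hF : Measurable F :=
    hf.continuousOn.enorm.measurable_piecewise continuousOn_const measurableSet_ball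
  have hpolar : Measurable fun p : ℝ × ℝ => ENNReal.ofReal p.1 * F (c + P p) := by
    refine measurable_fst.ennreal_ofReal.mul (hF.comp ?_)
    simp only [P, Complex.polarCoord_symm_apply]
    fun_prop
  have hcircle : ∀ r ∈ Ioo 0 R,
      ENNReal.ofReal (2 * π) * ‖f c‖ₑ ≤ ∫⁻ θ in Ioo (-π) π, F (c + P (r, θ)) := by
    intro r hr
    have hball : ∀ θ, circleMap c r θ ∈ ball c R := fun θ =>
      sphere_subset_ball hr.2 (circleMap_mem_sphere c hr.1.le θ)
    simp_rw [P, Complex.add_polarCoord_symm, F, indicator_of_mem (hball _)]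
    exact ofReal_two_pi_mul_enorm_le_lintegral_circleMap <|
      hf.diffContOnCl_ball (closedBall_subset_ball (by simpa [abs_of_pos hr.1] using hr.2))
  calc ENNReal.ofReal (π * R ^ 2) * ‖f c‖ₑ
      = ∫⁻ r in Ioo 0 R, ENNReal.ofReal r * (ENNReal.ofReal (2 * π) * ‖f c‖ₑ) := by
        rw [lintegral_mul_const' _ _ (by finiteness), lintegral_Ioo_ofReal_id hR, ← mul_assoc,
          ← ENNReal.ofReal_mul (by positivity)]
        ring_nf
    _ ≤ ∫⁻ r in Ioo 0 R, ∫⁻ θ in Ioo (-π) π, ENNReal.ofReal r * F (c + P (r, θ)) := by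
        refine setLIntegral_mono hpolar.lintegral_prod_right' fun r hr => ?_
        rw [lintegral_const_mul' _ _ ENNReal.ofReal_ne_top]
        gcongr
        exact hcircle r hr
    _ ≤ ∫⁻ r in Ioi 0, ∫⁻ θ in Ioo (-π) π, ENNReal.ofReal r * F (c + P (r, θ)) :=
        lintegral_mono_set Ioo_subset_Ioi_self
    _ = ∫⁻ p in Complex.polarCoord.target, ENNReal.ofReal p.1 * F (c + P p) := by
        rw [Complex.polarCoord_target, Measure.volume_eq_prod, ← Measure.prod_restrict,
          lintegral_prod _ hpolar.aemeasurable]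
    _ = ∫⁻ z in ball c R, ‖f z‖ₑ := by
        rw [← lintegral_indicator measurableSet_ball, ← lintegral_add_left_eq_self _ c,
          ← Complex.lintegral_comp_polarCoord_symm]
        rfl

end MeanValue

theorem Complex.isAddFundamentalDomain_re_mem_Ioc :
    IsAddFundamentalDomain (AddSubgroup.zmultiples (1 : ℂ)) {z : ℂ | z.re ∈ Ioc 0 1} := by
  refine IsAddFundamentalDomain.mk'
    (measurableSet_Ioc.preimage Complex.measurable_re).nullMeasurableSet fun z => ?_
  have : Bijective (codRestrict (fun n : ℤ => n • (1 : ℂ)) (AddSubgroup.zmultiples (1 : ℂ)) _) :=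
    (Equiv.ofInjective (fun n : ℤ => n • (1 : ℂ)) fun m n h => by simpa using h).bijective
  refine this.existsUnique_iff.2 ?_
  simpa [add_comm, AddSubgroup.vadd_def] using existsUnique_add_zsmul_mem_Ioc zero_lt_one z.re 0

theorem Complex.volume_setOf_re_mem_and_im_mem {A B : Set ℝ} (hA : MeasurableSet A)
    (hB : MeasurableSet B) : volume {z : ℂ | z.re ∈ A ∧ z.im ∈ B} = volume A * volume B := by
  have := Complex.volume_preserving_equiv_real_prod.measure_preimage (hA.prod hB).nullMeasurableSet
  rwa [Measure.volume_eq_prod, Measure.prod_prod] at this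

theorem volume_le_of_forall_add_intCast_notMem {S : Set ℂ} (hS : MeasurableSet S) {a b : ℝ}
    (hband : ∀ z ∈ S, z.im ∈ Icc a b) (hdisj : ∀ k : ℤ, k ≠ 0 → ∀ z ∈ S, z + k ∉ S) :
    volume S ≤ ENNReal.ofReal (b - a) := by
  set D := {z : ℂ | z.re ∈ Ioc 0 1}
  have hD : MeasurableSet D := measurableSet_Ioc.preimage Complex.measurable_re
  calc volume S = ∑' g : AddSubgroup.zmultiples (1 : ℂ), volume ((g +ᵥ S) ∩ D) :=
        Complex.isAddFundamentalDomain_re_mem_Ioc.measure_eq_tsum S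
    _ = volume (⋃ g : AddSubgroup.zmultiples (1 : ℂ), (g +ᵥ S) ∩ D) := by
        refine (measure_iUnion (fun g h hgh => ?_) fun g => (hS.const_vadd _).inter hD).symm
        refine (Disjoint.inter_left _ ?_).inter_right _
        rw [Set.disjoint_left]
        rintro _ ⟨z, hz, rfl⟩ ⟨w, hw, hwz⟩
        obtain ⟨k, hk⟩ := AddSubgroup.mem_zmultiples_iff.1 (g - h).2
        have hk' : (k : ℂ) = g - h := by simpa using hk
        refine hdisj k (fun hk0 => hgh (Subtype.ext (sub_eq_zero.1 ?_))) z hz ?_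
        · simpa [hk0] using hk'.symm
        · simp only [AddSubgroup.vadd_def, vadd_eq_add] at hwz
          rwa [hk', show z + (g - h) = w by linear_combination -hwz]
    _ ≤ volume {z : ℂ | z.re ∈ Ioc 0 1 ∧ z.im ∈ Icc a b} := by
        refine measure_mono (iUnion_subset fun g => ?_)
        rintro _ ⟨⟨z, hz, rfl⟩, hre⟩
        obtain ⟨k, hk⟩ := AddSubgroup.mem_zmultiples_iff.1 g.2
        exact ⟨hre, by simpa [AddSubgroup.vadd_def, ← hk] using hband z hz⟩
    _ = ENNReal.ofReal (b - a) := by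
        rw [Complex.volume_setOf_re_mem_and_im_mem measurableSet_Ioc measurableSet_Icc]
        simp

theorem Complex.det_restrictScalars_toSpanSingleton (c : ℂ) :
    ((ContinuousLinearMap.toSpanSingleton ℂ c).restrictScalars ℝ : ℂ →L[ℝ] ℂ).det =
      Complex.normSq c := by
  have : ((ContinuousLinearMap.toSpanSingleton ℂ c).restrictScalars ℝ : ℂ →ₗ[ℝ] ℂ) =
      (c • LinearMap.id : ℂ →ₗ[ℂ] ℂ).restrictScalars ℝ := by
    ext; simp [mul_comm]
  rw [ContinuousLinearMap.det, ← Algebra.norm_complex_apply, this, LinearMap.det_restrictScalars]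
  simp

theorem lintegral_enorm_deriv_sq_eq_volume_image {g : ℂ → ℂ} {s : Set ℂ} (hs : MeasurableSet s)
    (hd : ∀ z ∈ s, DifferentiableAt ℂ g z) (hi : InjOn g s) :
    ∫⁻ z in s, ‖deriv g z‖ₑ ^ 2 = volume (g '' s) := by
  rw [← lintegral_abs_det_fderiv_eq_addHaar_image volume hs
    (fun z hz => ((hd z hz).hasDerivAt.hasFDerivAt.restrictScalars ℝ).hasFDerivWithinAt) hi]
  refine setLIntegral_congr_fun hs fun z _ => ?_
  rw [Complex.det_restrictScalars_toSpanSingleton, abs_of_nonneg (Complex.normSq_nonneg _),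
    Complex.normSq_eq_norm_sq, ENNReal.ofReal_pow (norm_nonneg _), ofReal_norm]

theorem Complex.abs_im_sub_im_le_dist (v w : ℂ) : |v.im - w.im| ≤ dist v w := by
  simpa [dist_eq_norm] using Complex.abs_im_le_norm (v - w)

/-- Bootstrap with the weight `d w = 1 - |w.im - c|`: on `ball w (d w / 2)` the weight is at least
`d w / 2`, so `N = sup (d * u)` satisfies `N ^ 2 ≤ 4 A N`. -/
theorem le_four_mul_of_forall_mul_sq_le {u : ℂ → ℝ} {c A : ℝ} (hA : 0 ≤ A) (hu : ∀ z, 0 ≤ u z)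
    (hbdd : BddAbove (u '' {z | |z.im - c| < 1}))
    (harea : ∀ z r M, 0 < r → r ≤ 1 / 2 → ball z r ⊆ {w | |w.im - c| < 1} →
      (∀ w ∈ ball z r, u w ≤ M) → r * u z ^ 2 ≤ A * M)
    {z : ℂ} (hz : z.im = c) : u z ≤ 4 * A := by
  set S := {z : ℂ | |z.im - c| < 1}
  set d : ℂ → ℝ := fun z => 1 - |z.im - c|
  have hd_le : ∀ w, d w ≤ 1 := fun w => by simp [d]
  have hzS : z ∈ S := by simp [S, hz]
  have hdz : d z = 1 := by simp [d, hz]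
  obtain ⟨B, hB⟩ := hbdd
  have hbdd' : BddAbove ((fun w => d w * u w) '' S) := by
    refine ⟨B, ?_⟩
    rintro _ ⟨w, hw, rfl⟩
    nlinarith [hB (mem_image_of_mem u hw), hu w, hd_le w, abs_nonneg (w.im - c)]
  set N := sSup ((fun w => d w * u w) '' S)
  have hle_N : ∀ w ∈ S, d w * u w ≤ N := fun w hw => le_csSup hbdd' (mem_image_of_mem _ hw)
  have hN : 0 ≤ N := le_trans (by simpa [hdz] using hu z) (hle_N z hzS)
  have hsq : ∀ w ∈ S, (d w * u w) ^ 2 ≤ 4 * A * N := by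
    intro w (hw : |w.im - c| < 1)
    have hdw : 0 < d w := by simp only [d]; linarith
    have hv : ∀ v, dist v w ≤ d w / 2 → d w / 2 ≤ d v := fun v hv => by
      have := abs_sub_abs_le_abs_sub (v.im - c) (w.im - c)
      simp only [d, sub_sub_sub_cancel_right] at this ⊢
      linarith [Complex.abs_im_sub_im_le_dist v w]
    have hball : ball w (d w / 2) ⊆ S := fun v hv' => by
      have := hv v (mem_ball.1 hv').le
      simp only [d, S, mem_ofPred_eq] at this ⊢
      linarith
    have hM : ∀ v ∈ ball w (d w / 2), u v ≤ 2 * N / d w := by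
      intro v hv'
      have := hv v (mem_ball.1 hv').le
      rw [le_div_iff₀ hdw]
      nlinarith [hle_N v (hball hv'), hu v]
    have := harea w (d w / 2) (2 * N / d w) (by positivity) (by linarith [hd_le w]) hball hM
    rw [mul_div_assoc', le_div_iff₀ hdw] at this
    nlinarith
  have hN_sq : N ^ 2 ≤ 4 * A * N := by
    refine (Real.le_sqrt hN (by positivity)).1 (csSup_le ⟨_, mem_image_of_mem _ hzS⟩ ?_)
    rintro _ ⟨w, hw, rfl⟩
    exact (le_abs_self _).trans (Real.abs_le_sqrt (hsq w hw))
  have : u z ≤ N := by simpa [hdz] using hle_N z hzS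
  nlinarith

theorem Function.Periodic.bddAbove_norm_image_im_mem_Icc {E : Type*} [NormedAddCommGroup E]
    {f : ℂ → E} (hf : Periodic f 1) {a b : ℝ} (hc : ContinuousOn f {z | z.im ∈ Icc a b}) :
    BddAbove ((‖f ·‖) '' {z | z.im ∈ Icc a b}) := by
  have hK : IsCompact (Icc (0 : ℝ) 1 ×ℂ Icc a b) := isCompact_Icc.reProdIm isCompact_Icc
  refine (hK.image_of_continuousOn (hc.mono fun z hz => hz.2).norm).bddAbove.mono ?_
  rintro _ ⟨z, hz, rfl⟩
  refine ⟨z - ⌊z.re⌋, ⟨?_, by simpa using hz⟩,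
    by simpa using congrArg norm (hf.sub_int_mul_eq ⌊z.re⌋ (x := z))⟩
  simpa [← Int.self_sub_floor] using And.intro (Int.fract_nonneg z.re) (Int.fract_lt_one z.re).le

/-- Schwarz lemma for the cusp function `F` of `f` (`f z = F (exp (2πiz))`) on the disc of
radius `exp (-2πa)`. -/
theorem norm_sub_cuspFunction_zero_le {f : ℂ → ℂ} (hf : Periodic f 1) {a M : ℝ}
    (hdiff : ∀ z : ℂ, a < z.im → DifferentiableAt ℂ f z) (hM : ∀ z : ℂ, a < z.im → ‖f z‖ ≤ M)
    {z : ℂ} (hz : a < z.im) :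
    ‖f z - cuspFunction 1 f 0‖ ≤ 2 * M * Real.exp (-2 * π * (z.im - a)) := by
  set F := cuspFunction 1 f
  set ρ := Real.exp (-2 * π * a)
  have hρ : 0 < ρ := Real.exp_pos _
  have him : ∀ q ∈ ball (0 : ℂ) ρ, q ≠ 0 → a < (invQParam 1 q).im := by
    intro q hq hq0
    have := Real.log_lt_log (norm_pos_iff.2 hq0) (mem_ball_zero_iff.1 hq)
    rw [Real.log_exp] at this
    rw [Function.Periodic.im_invQParam, div_mul_eq_mul_div, lt_div_iff₀ (by positivity)]
    linarith
  have hFq : ∀ q ∈ ball (0 : ℂ) ρ, q ≠ 0 → DifferentiableAt ℂ F q ∧ ‖F q‖ ≤ M := by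
    intro q hq hq0
    refine ⟨?_, ?_⟩
    · rw [← Function.Periodic.qParam_right_inv one_ne_zero hq0]
      exact Function.Periodic.differentiableAt_cuspFunction one_ne_zero hf (hdiff _ (him q hq hq0))
    · rw [show F q = f (invQParam 1 q) from Function.Periodic.cuspFunction_eq_of_nonzero _ _ hq0]
      exact hM _ (him q hq hq0)
  have hevent : ∀ᶠ w in comap Complex.im atTop, a < w.im :=
    eventually_comap.2 ((eventually_gt_atTop a).mono fun _ h _ hb => hb ▸ h)
  have hF0 : DifferentiableAt ℂ F 0 :=
    Function.Periodic.differentiableAt_cuspFunction_zero one_pos hf (hevent.mono hdiff)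
      (Asymptotics.IsBigO.of_bound M (hevent.mono fun w hw => by simpa using hM w hw))
  have hFM : ∀ q ∈ ball (0 : ℂ) ρ, ‖F q‖ ≤ M := by
    intro q hq
    rcases eq_or_ne q 0 with rfl | hq0
    · have hnear : ∀ᶠ q in 𝓝[≠] (0 : ℂ), q ∈ ball (0 : ℂ) ρ ∧ q ≠ 0 :=
        Eventually.and (mem_nhdsWithin_of_mem_nhds (ball_mem_nhds 0 hρ)) self_mem_nhdsWithin
      exact le_of_tendsto (hF0.continuousAt.tendsto.mono_left nhdsWithin_le_nhds).norm
        (hnear.mono fun q hq => (hFq q hq.1 hq.2).2)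
    · exact (hFq q hq hq0).2
  have hFdiff : DifferentiableOn ℂ F (ball 0 ρ) := by
    intro q hq
    rcases eq_or_ne q 0 with rfl | hq0
    · exact hF0.differentiableWithinAt
    · exact (hFq q hq hq0).1.differentiableWithinAt
  have hmaps : MapsTo F (ball 0 ρ) (closedBall (F 0) (2 * M)) := fun q hq => by
    rw [mem_closedBall, dist_eq_norm]
    linarith [norm_sub_le (F q) (F 0), hFM q hq, hFM 0 (mem_ball_self hρ)]
  have hqz : qParam 1 z ∈ ball (0 : ℂ) ρ := by
    rw [mem_ball_zero_iff, Function.Periodic.norm_qParam, Real.exp_lt_exp, div_one]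
    nlinarith [pi_pos]
  have := Complex.dist_le_div_mul_dist_of_mapsTo_ball hFdiff hmaps hqz
  rw [show F (qParam 1 z) = f z from Function.Periodic.eq_cuspFunction one_ne_zero hf z,
    dist_eq_norm, dist_zero_right, Function.Periodic.norm_qParam, div_one, div_eq_mul_inv,
    ← Real.exp_neg, mul_assoc, ← Real.exp_add] at this
  convert this using 4
  ring

structure ShiftEquivariantUnivalent (g : ℂ → ℂ) : Prop where
  differentiableOn : DifferentiableOn ℂ g {z : ℂ | 0 < z.im}
  injOn : InjOn g {z : ℂ | 0 < z.im}
  add_one : ∀ z : ℂ, 0 < z.im → g (z + 1) = g z + 1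

/-- `deriv g`, extended by `0` off the upper half-plane so that it is `1`-periodic on all of `ℂ`
(as the `cuspFunction` API requires). -/
noncomputable def upperDeriv (g : ℂ → ℂ) (z : ℂ) : ℂ := if 0 < z.im then deriv g z else 0

theorem upperDeriv_of_im_pos {g : ℂ → ℂ} {z : ℂ} (hz : 0 < z.im) : upperDeriv g z = deriv g z :=
  if_pos hz

namespace ShiftEquivariantUnivalent

variable {g : ℂ → ℂ}

theorem add_intCast (hg : ShiftEquivariantUnivalent g) (k : ℤ) {z : ℂ} (hz : 0 < z.im) :
    g (z + k) = g z + k := by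
  induction k using Int.induction_on with
  | zero => simp
  | succ n ih =>
    push_cast at ih ⊢
    rw [← add_assoc, hg.add_one _ (by simpa using hz), ih, add_assoc]
  | pred n ih =>
    have := hg.add_one (z + (-n - 1 : ℤ)) (by simpa using hz)
    push_cast at this ih ⊢
    rw [show z + (-n - 1) + 1 = z + -n by ring, ih] at this
    linear_combination -this

theorem differentiableAt (hg : ShiftEquivariantUnivalent g) {z : ℂ} (hz : 0 < z.im) :
    DifferentiableAt ℂ g z :=
  hg.differentiableOn.differentiableAt ((Complex.isOpen_im_gt 0).mem_nhds hz)

theorem differentiableAt_deriv (hg : ShiftEquivariantUnivalent g) {z : ℂ} (hz : 0 < z.im) :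
    DifferentiableAt ℂ (deriv g) z :=
  ((hg.differentiableOn.analyticOnNhd (Complex.isOpen_im_gt 0)).deriv z hz).differentiableAt

theorem deriv_add_one (hg : ShiftEquivariantUnivalent g) {z : ℂ} (hz : 0 < z.im) :
    deriv g (z + 1) = deriv g z := by
  have : (g <| · + 1) =ᶠ[𝓝 z] (g · + 1) :=
    eventually_of_mem ((Complex.isOpen_im_gt 0).mem_nhds hz) hg.add_one
  rw [← deriv_comp_add_const, this.deriv_eq, deriv_add_const]

theorem periodic_upperDeriv (hg : ShiftEquivariantUnivalent g) : Periodic (upperDeriv g) 1 := by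
  intro z
  by_cases hz : 0 < z.im
  · simp [upperDeriv, hz, hg.deriv_add_one hz]
  · simp [upperDeriv, hz]

theorem differentiableAt_upperDeriv (hg : ShiftEquivariantUnivalent g) {z : ℂ} (hz : 0 < z.im) :
    DifferentiableAt ℂ (upperDeriv g) z := by
  have : upperDeriv g =ᶠ[𝓝 z] deriv g :=
    eventually_of_mem ((Complex.isOpen_im_gt 0).mem_nhds hz) fun _ => upperDeriv_of_im_pos
  exact this.differentiableAt_iff.2 (hg.differentiableAt_deriv hz)

theorem bddAbove_norm_deriv (hg : ShiftEquivariantUnivalent g) {c : ℝ} (hc : 2 ≤ c) :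
    BddAbove ((‖deriv g ·‖) '' {z | |z.im - c| < 1}) := by
  have hpos : ∀ z : ℂ, z.im ∈ Icc (c - 1) (c + 1) → 0 < z.im := fun z hz => by linarith [hz.1]
  refine (hg.periodic_upperDeriv.bddAbove_norm_image_im_mem_Icc fun z hz =>
    (hg.differentiableAt_upperDeriv (hpos z hz)).continuousAt.continuousWithinAt).mono ?_
  rintro _ ⟨z, hz, rfl⟩
  have hz' : z.im ∈ Icc (c - 1) (c + 1) := by
    rw [mem_ofPred_eq, abs_lt] at hz
    constructor <;> linarith
  exact ⟨z, hz', by simp only [upperDeriv_of_im_pos (hpos z hz')]⟩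

theorem volume_image_ball_le (hg : ShiftEquivariantUnivalent g) {z : ℂ} {r M : ℝ}
    (hr : r ≤ 1 / 2) (hsub : ball z r ⊆ {w : ℂ | 0 < w.im})
    (hM : ∀ w ∈ ball z r, ‖deriv g w‖ ≤ M) :
    volume (g '' ball z r) ≤ ENNReal.ofReal (2 * M * r) := by
  have hdiff : ∀ w ∈ ball z r, DifferentiableAt ℂ g w := fun w hw => hg.differentiableAt (hsub hw)
  have hmeas : MeasurableSet (g '' ball z r) :=
    measurableSet_ball.image_of_continuousOn_injOn
      (fun w hw => (hdiff w hw).continuousAt.continuousWithinAt) (hg.injOn.mono hsub)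
  have hband : ∀ p ∈ g '' ball z r, p.im ∈ Icc ((g z).im - M * r) ((g z).im + M * r) := by
    rintro _ ⟨w, hw, rfl⟩
    have hlip := Convex.norm_image_sub_le_of_norm_deriv_le hdiff hM (convex_ball z r)
      (mem_ball_self (pos_of_mem_ball hw)) hw
    have := (Complex.abs_im_le_norm (g w - g z)).trans (hlip.trans
      (mul_le_mul_of_nonneg_left (mem_ball_iff_norm.1 hw).le ((norm_nonneg _).trans (hM w hw))))
    rw [Complex.sub_im, abs_le] at this
    constructor <;> linarith
  have hdisj : ∀ k : ℤ, k ≠ 0 → ∀ p ∈ g '' ball z r, p + k ∉ g '' ball z r := by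
    rintro k hk _ ⟨w, hw, rfl⟩ ⟨w', hw', hww'⟩
    have hwk : 0 < (w + k).im := by simpa using hsub hw
    have h_eq : w' = w + k := hg.injOn (hsub hw') hwk (by rw [hww', hg.add_intCast k (hsub hw)])
    have h1 : (1 : ℝ) ≤ dist w' w := by
      simpa [h_eq, dist_eq_norm, Complex.norm_intCast] using
        (Int.cast_le (R := ℝ)).2 (Int.one_le_abs hk)
    linarith [dist_triangle_right w' w z, mem_ball.1 hw, mem_ball.1 hw']
  convert volume_le_of_forall_add_intCast_notMem hmeas hband hdisj using 2
  ring

theorem mul_sq_norm_deriv_le (hg : ShiftEquivariantUnivalent g) {z : ℂ} {r M : ℝ} (hr : 0 < r)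
    (hr2 : r ≤ 1 / 2) (hsub : ball z r ⊆ {w : ℂ | 0 < w.im})
    (hM : ∀ w ∈ ball z r, ‖deriv g w‖ ≤ M) :
    r * ‖deriv g z‖ ^ 2 ≤ 2 / π * M := by
  have hsq : DifferentiableOn ℂ (fun w => deriv g w ^ 2) (ball z r) := fun w hw =>
    ((hg.differentiableAt_deriv (hsub hw)).pow 2).differentiableWithinAt
  have key : ENNReal.ofReal (π * r ^ 2 * ‖deriv g z‖ ^ 2) ≤ ENNReal.ofReal (2 * M * r) :=
    calc ENNReal.ofReal (π * r ^ 2 * ‖deriv g z‖ ^ 2)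
        = ENNReal.ofReal (π * r ^ 2) * ‖deriv g z ^ 2‖ₑ := by
          rw [ENNReal.ofReal_mul (by positivity), ← ofReal_norm, norm_pow]
      _ ≤ ∫⁻ w in ball z r, ‖deriv g w ^ 2‖ₑ :=
          ofReal_pi_mul_sq_mul_enorm_le_setLIntegral_ball hr.le hsq
      _ = volume (g '' ball z r) := by
          simp_rw [enorm_pow]
          exact lintegral_enorm_deriv_sq_eq_volume_image measurableSet_ball
            (fun w hw => hg.differentiableAt (hsub hw)) (hg.injOn.mono hsub)
      _ ≤ ENNReal.ofReal (2 * M * r) := hg.volume_image_ball_le hr2 hsub hM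
  have hM0 : 0 ≤ M := (norm_nonneg _).trans (hM z (mem_ball_self hr))
  rw [ENNReal.ofReal_le_ofReal_iff (by positivity)] at key
  rw [div_mul_eq_mul_div, le_div_iff₀ pi_pos]
  nlinarith

theorem norm_deriv_le (hg : ShiftEquivariantUnivalent g) {z : ℂ} (hz : 2 ≤ z.im) :
    ‖deriv g z‖ ≤ 8 / π := by
  refine (le_four_mul_of_forall_mul_sq_le (u := (‖deriv g ·‖)) (A := 2 / π) (by positivity)
    (fun _ => norm_nonneg _) (hg.bddAbove_norm_deriv hz) ?_ rfl).trans_eq (by ring)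
  intro w r M hr hr2 hsub hM
  refine hg.mul_sq_norm_deriv_le hr hr2 (fun v hv => ?_) hM
  have := hsub hv
  simp only [mem_ofPred_eq, abs_lt] at this ⊢
  linarith

theorem norm_deriv_sub_one_le (hg : ShiftEquivariantUnivalent g) {z : ℂ} (hz : 2 < z.im) :
    ‖deriv g z - 1‖ ≤ 12 * Real.exp (-2 * π * (z.im - 2)) := by
  set L := cuspFunction 1 (upperDeriv g) 0
  set K : ℝ → ℝ := fun y => 2 * 3 * Real.exp (-2 * π * (y - 2))
  have hdecay : ∀ w : ℂ, 2 < w.im → ‖deriv g w - L‖ ≤ K w.im := by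
    intro w hw
    have hpos : ∀ v : ℂ, 2 < v.im → 0 < v.im := fun v hv => two_pos.trans hv
    have h8 : 8 / π ≤ 3 := by rw [div_le_iff₀ pi_pos]; linarith [pi_gt_three]
    have := norm_sub_cuspFunction_zero_le hg.periodic_upperDeriv (M := 3)
      (fun v hv => hg.differentiableAt_upperDeriv (hpos v hv))
      (fun v hv => by
        rw [upperDeriv_of_im_pos (hpos v hv)]
        exact (hg.norm_deriv_le hv.le).trans h8)
      hw
    rwa [upperDeriv_of_im_pos (hpos w hw)] at this
  have hmean : ‖1 - L‖ ≤ K z.im := by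
    have hs : ∀ w ∈ {w : ℂ | z.im ≤ w.im}, 2 < w.im := fun w hw => hz.trans_le hw
    have hdiff : ∀ w ∈ {w : ℂ | z.im ≤ w.im}, DifferentiableAt ℂ g w :=
      fun w hw => hg.differentiableAt (two_pos.trans (hs w hw))
    have := (convex_halfSpace_im_ge z.im).norm_image_sub_le_of_norm_deriv_le
      (f := fun w => g w - L * w) (C := K z.im)
      (fun w hw => (hdiff w hw).sub (differentiableAt_id.const_mul L))
      (fun w hw => ?_) (le_refl z.im) (show z.im ≤ (z + 1).im by simp)
    · simp only [hg.add_one z (two_pos.trans hz), add_sub_cancel_left, norm_one, mul_one] at this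
      rwa [show g z + 1 - L * (z + 1) - (g z - L * z) = 1 - L by ring] at this
    · rw [((hdiff w hw).hasDerivAt.fun_sub ((hasDerivAt_id' w).const_mul L)).deriv, mul_one]
      have : z.im ≤ w.im := hw
      exact (hdecay w (hs w hw)).trans
        (mul_le_mul_of_nonneg_left (Real.exp_le_exp.2 (by nlinarith [pi_pos])) (by positivity))
  calc ‖deriv g z - 1‖ ≤ ‖deriv g z - L‖ + ‖1 - L‖ := by
        rw [norm_sub_rev 1 L]
        exact norm_sub_le_norm_sub_add_norm_sub _ _ _
    _ ≤ K z.im + K z.im := add_le_add (hdecay z hz) hmean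
    _ = 12 * Real.exp (-2 * π * (z.im - 2)) := by ring

end ShiftEquivariantUnivalent

/-- There is a universal constant `C > 0` such that for every injective holomorphic
`g : ℍ → ℂ` with `g(z+1) = g(z)+1` and every `z` with `Im z ≥ C`,
`1/C ≤ |g'(z)| ≤ C`. -/
theorem stmt4 :
    ∃ C : ℝ, 0 < C ∧
      ∀ g : ℂ → ℂ,
        DifferentiableOn ℂ g {z : ℂ | 0 < z.im} →
        Set.InjOn g {z : ℂ | 0 < z.im} →
        (∀ z : ℂ, 0 < z.im → g (z + 1) = g z + 1) →
        ∀ z : ℂ, 0 < z.im → C ≤ z.im →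
          1 / C ≤ ‖deriv g z‖ ∧ ‖deriv g z‖ ≤ C := by
  refine ⟨6, by norm_num, fun g hd hi hp z _ hz => ?_⟩
  have hclose := ShiftEquivariantUnivalent.norm_deriv_sub_one_le ⟨hd, hi, hp⟩ (by linarith)
  have hsmall : 12 * Real.exp (-2 * π * (z.im - 2)) ≤ 1 / 2 := by
    have h25 : 25 ≤ Real.exp (8 * π) := by linarith [Real.add_one_le_exp (8 * π), pi_gt_three]
    calc 12 * Real.exp (-2 * π * (z.im - 2)) ≤ 12 * Real.exp (-(8 * π)) := by
          gcongr
          nlinarith [pi_pos]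
      _ ≤ 1 / 2 := by
          rw [Real.exp_neg, ← div_eq_mul_inv, div_le_iff₀ (by positivity)]
          linarith
  have := abs_norm_sub_norm_le (deriv g z) 1
  rw [norm_one, abs_le] at this
  constructor <;> linarith
end
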